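/- (Linear common-descent bound.) Under the setting of the common descent certificate—f_1, …, f_N : ℝ^d → ℝ L-smooth with ‖∇f_i‖ ≤ G_f, weights ρ_i > 0 summing to 1 with ρ_min = min_i ρ_i, F = Σ ρ_i f_i, η_l > 0, K_i ≥ 1 with K_max = max_i K_i, nonzero accumulated client updates g_i at a point θ, and g ∈ ℝ^d with ⟨g_i/‖g_i‖, g⟩ = ρ_i for all i and ‖g‖ ≤ G—one has the linear bound ⟨∇F(θ), g⟩ ≥ ρ_min ‖∇F(θ)‖ − B_drift · η_l (K_max − 1), where B_drift = (L G_f/2)(G + Σ_{i=1}^N ρ_i²). -/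

import Mathlib

/-!
Each client's accumulated update, divided by `K i ηl`, is the mean gradient along its local
trajectory. The trajectory moves at most `ηl Gf` per step, so by `L`-smoothness this mean lies
within `L ηl Gf (K i - 1) / 2 ≤ L ηl Gf (K_max - 1) / 2 =: D` of `∇fᵢ(θ)`. Hence the alignment
`⟪gᵢ/‖gᵢ‖, g⟫ = ρᵢ` transfers to `∇fᵢ(θ)` up to an error `ρᵢ D + D ‖g‖`, and averaging with the
weights `ρᵢ ≥ ρ_min` gives the claim, since `ρ_min ‖∑ ρᵢ ∇fᵢ(θ)‖ ≤ ∑ ρᵢ² ‖∇fᵢ(θ)‖`.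
-/

open scoped InnerProductSpace BigOperators

/-- Local gradient-descent trajectory. -/
noncomputable def traj {E : Type*} [NormedAddCommGroup E] [InnerProductSpace ℝ E]
    [CompleteSpace E] (f : E → ℝ) (ηl : ℝ) (θ : E) : ℕ → E
  | 0 => θ
  | k + 1 => traj f ηl θ k - ηl • gradient f (traj f ηl θ k)

theorem nonneg_of_norm_sub_le_mul_norm_sub {E F : Type*} [NormedAddCommGroup E]
    [SeminormedAddCommGroup F] {φ : E → F} {L : ℝ} {x y : E} (h : ‖φ x - φ y‖ ≤ L * ‖x - y‖)
    (hxy : x ≠ y) : 0 ≤ L :=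
  nonneg_of_mul_nonneg_left ((norm_nonneg _).trans h) (norm_pos_iff.mpr (sub_ne_zero.mpr hxy))

theorem sum_range_natCast_eq (K : ℕ) : ∑ k ∈ Finset.range K, (k : ℝ) = K * (K - 1) / 2 := by
  induction K with
  | zero => simp
  | succ K ih => rw [Finset.sum_range_succ, ih]; push_cast; ring

theorem norm_inv_smul_sum_range_sub_le {F : Type*} [NormedAddCommGroup F] [NormedSpace ℝ F]
    {y : ℕ → F} {c : ℝ} (h : ∀ k, ‖y k - y 0‖ ≤ c * k) {K : ℕ} (hK : K ≠ 0) :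
    ‖(K : ℝ)⁻¹ • ∑ k ∈ Finset.range K, y k - y 0‖ ≤ c * (K - 1) / 2 := by
  have hK' : (0 : ℝ) < K := Nat.cast_pos.mpr (Nat.pos_of_ne_zero hK)
  have hcenter : (K : ℝ)⁻¹ • ∑ k ∈ Finset.range K, y k - y 0
      = (K : ℝ)⁻¹ • ∑ k ∈ Finset.range K, (y k - y 0) := by
    rw [Finset.sum_sub_distrib, Finset.sum_const, Finset.card_range, smul_sub,
      ← Nat.cast_smul_eq_nsmul ℝ, smul_smul, inv_mul_cancel₀ hK'.ne', one_smul]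
  calc ‖(K : ℝ)⁻¹ • ∑ k ∈ Finset.range K, y k - y 0‖
      ≤ (K : ℝ)⁻¹ * ∑ k ∈ Finset.range K, c * k := by
        rw [hcenter, norm_smul, Real.norm_of_nonneg (inv_nonneg.mpr hK'.le)]
        exact mul_le_mul_of_nonneg_left ((norm_sum_le _ _).trans
          (Finset.sum_le_sum fun k _ => h k)) (inv_nonneg.mpr hK'.le)
    _ = c * (K - 1) / 2 := by
        rw [← Finset.mul_sum, sum_range_natCast_eq]; field_simp

section InnerProductSpace

variable {E : Type*} [NormedAddCommGroup E] [InnerProductSpace ℝ E]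

theorem inner_smul_eq_mul_norm_of_inner_normalize_eq {u g : E} {ρ c : ℝ} (hu : u ≠ 0)
    (h : ⟪‖u‖⁻¹ • u, g⟫_ℝ = ρ) (hc : 0 ≤ c) : ⟪c • u, g⟫_ℝ = ρ * ‖c • u‖ := by
  have hcu : c • u = (c * ‖u‖) • (‖u‖⁻¹ • u) := by
    rw [smul_smul, mul_assoc, mul_inv_cancel₀ (norm_ne_zero_iff.mpr hu), mul_one]
  rw [hcu, real_inner_smul_left, h, norm_smul, norm_smul, norm_inv, norm_norm,
    inv_mul_cancel₀ (norm_ne_zero_iff.mpr hu), mul_one, Real.norm_of_nonneg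
      (mul_nonneg hc (norm_nonneg u)), mul_comm]

theorem inner_ge_of_inner_eq_mul_norm {s v g : E} {ρ D G : ℝ} (hs : ⟪s, g⟫_ℝ = ρ * ‖s‖)
    (hρ : 0 ≤ ρ) (hsv : ‖s - v‖ ≤ D) (hg : ‖g‖ ≤ G) :
    ρ * ‖v‖ - ρ * D - D * G ≤ ⟪v, g⟫_ℝ := by
  have hv : ‖v‖ - D ≤ ‖s‖ := by linarith [norm_sub_norm_le v s, norm_sub_rev v s]
  have herr : ⟪s - v, g⟫_ℝ ≤ D * G :=
    (real_inner_le_norm _ _).trans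
      (mul_le_mul hsv hg (norm_nonneg _) ((norm_nonneg _).trans hsv))
  have hsplit : ⟪v, g⟫_ℝ = ⟪s, g⟫_ℝ - ⟪s - v, g⟫_ℝ := by rw [inner_sub_left]; ring
  nlinarith

theorem mul_norm_sum_smul_le_sum_sq_mul_norm {ι : Type*} (s : Finset ι) {ρ : ι → ℝ} {c : ℝ}
    (v : ι → E) (hρ : ∀ i ∈ s, 0 ≤ ρ i) (hc : ∀ i ∈ s, c ≤ ρ i) :
    c * ‖∑ i ∈ s, ρ i • v i‖ ≤ ∑ i ∈ s, ρ i ^ 2 * ‖v i‖ := by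
  have hterm : ∀ i ∈ s, c * (ρ i * ‖v i‖) ≤ ρ i ^ 2 * ‖v i‖ := fun i hi => by
    nlinarith [hc i hi, mul_nonneg (hρ i hi) (norm_nonneg (v i))]
  rcases le_total c 0 with hc0 | hc0
  · exact (mul_nonpos_of_nonpos_of_nonneg hc0 (norm_nonneg _)).trans
      (Finset.sum_nonneg fun i _ => by positivity)
  calc c * ‖∑ i ∈ s, ρ i • v i‖ ≤ c * ∑ i ∈ s, ρ i * ‖v i‖ := by
        refine mul_le_mul_of_nonneg_left ((norm_sum_le _ _).trans_eq ?_) hc0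
        refine Finset.sum_congr rfl fun i hi => ?_
        rw [norm_smul, Real.norm_of_nonneg (hρ i hi)]
    _ ≤ ∑ i ∈ s, ρ i ^ 2 * ‖v i‖ := by
        rw [Finset.mul_sum]; exact Finset.sum_le_sum hterm

theorem inner_sum_smul_ge {ι : Type*} (s : Finset ι) {ρ : ι → ℝ} {c D G : ℝ} {v : ι → E}
    {g : E} (hρ : ∀ i ∈ s, 0 ≤ ρ i) (hρsum : ∑ i ∈ s, ρ i = 1) (hc : ∀ i ∈ s, c ≤ ρ i)
    (hv : ∀ i ∈ s, ρ i * ‖v i‖ - ρ i * D - D * G ≤ ⟪v i, g⟫_ℝ) :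
    c * ‖∑ i ∈ s, ρ i • v i‖ - D * (G + ∑ i ∈ s, ρ i ^ 2) ≤ ⟪∑ i ∈ s, ρ i • v i, g⟫_ℝ := by
  have hterm : ∀ i, ρ i * (ρ i * ‖v i‖ - ρ i * D - D * G)
      = ρ i ^ 2 * ‖v i‖ - ρ i ^ 2 * D - ρ i * (D * G) := fun i => by ring
  have hweighted : ∑ i ∈ s, ρ i * (ρ i * ‖v i‖ - ρ i * D - D * G)
      = ∑ i ∈ s, ρ i ^ 2 * ‖v i‖ - D * (G + ∑ i ∈ s, ρ i ^ 2) := by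
    simp only [hterm, Finset.sum_sub_distrib, ← Finset.sum_mul, hρsum]
    ring
  calc c * ‖∑ i ∈ s, ρ i • v i‖ - D * (G + ∑ i ∈ s, ρ i ^ 2)
      ≤ ∑ i ∈ s, ρ i * (ρ i * ‖v i‖ - ρ i * D - D * G) := by
        rw [hweighted]
        linarith [mul_norm_sum_smul_le_sum_sq_mul_norm s v hρ hc]
    _ ≤ ∑ i ∈ s, ρ i * ⟪v i, g⟫_ℝ :=
        Finset.sum_le_sum fun i hi => mul_le_mul_of_nonneg_left (hv i hi) (hρ i hi)
    _ = ⟪∑ i ∈ s, ρ i • v i, g⟫_ℝ := by simp only [sum_inner, real_inner_smul_left]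

variable [CompleteSpace E]

theorem gradient_sum_mul {ι : Type*} (s : Finset ι) (w : ι → ℝ) {f : ι → E → ℝ} {x : E}
    (hf : ∀ i ∈ s, DifferentiableAt ℝ (f i) x) :
    gradient (fun y => ∑ i ∈ s, w i * f i y) x = ∑ i ∈ s, w i • gradient (f i) x := by
  simp only [gradient]
  rw [fderiv_fun_sum fun i hi => (hf i hi).const_mul (w i), map_sum]
  exact Finset.sum_congr rfl fun i hi => by rw [fderiv_const_mul (hf i hi), map_smul]

theorem norm_traj_sub_le {f : E → ℝ} {η Gf : ℝ} (θ : E) (hη : 0 ≤ η)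
    (hGf : ∀ x, ‖gradient f x‖ ≤ Gf) (k : ℕ) : ‖traj f η θ k - θ‖ ≤ η * Gf * k := by
  induction k with
  | zero => simp [traj]
  | succ k ih =>
    have hstep : ‖η • gradient f (traj f η θ k)‖ ≤ η * Gf := by
      rw [norm_smul, Real.norm_of_nonneg hη]
      exact mul_le_mul_of_nonneg_left (hGf _) hη
    calc ‖traj f η θ (k + 1) - θ‖
        = ‖(traj f η θ k - θ) - η • gradient f (traj f η θ k)‖ := by rw [traj, sub_right_comm]
      _ ≤ η * Gf * k + η * Gf := (norm_sub_le _ _).trans (add_le_add ih hstep)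
      _ = η * Gf * (k + 1 : ℕ) := by push_cast; ring

theorem norm_inv_smul_sum_gradient_traj_sub_le {f : E → ℝ} {η L Gf : ℝ} (θ : E) (hη : 0 ≤ η)
    (hL : 0 ≤ L) (hLip : ∀ x y, ‖gradient f x - gradient f y‖ ≤ L * ‖x - y‖)
    (hGf : ∀ x, ‖gradient f x‖ ≤ Gf) {K : ℕ} (hK : K ≠ 0) :
    ‖(K : ℝ)⁻¹ • ∑ k ∈ Finset.range K, gradient f (traj f η θ k) - gradient f θ‖
      ≤ L * η * Gf * (K - 1) / 2 := by
  refine norm_inv_smul_sum_range_sub_le (y := fun k => gradient f (traj f η θ k))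
    (fun k => ?_) hK
  calc ‖gradient f (traj f η θ k) - gradient f θ‖ ≤ L * ‖traj f η θ k - θ‖ := hLip _ _
    _ ≤ L * (η * Gf * k) := mul_le_mul_of_nonneg_left (norm_traj_sub_le θ hη hGf k) hL
    _ = L * η * Gf * k := by ring

end InnerProductSpace

theorem linear_common_descent_bound_general {d N : ℕ}
    (f : Fin N → EuclideanSpace ℝ (Fin d) → ℝ) (L Gf : ℝ)
    (hdiff : ∀ i, Differentiable ℝ (f i))
    (hLip : ∀ i x y, ‖gradient (f i) x - gradient (f i) y‖ ≤ L * ‖x - y‖)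
    (hGf : ∀ i x, ‖gradient (f i) x‖ ≤ Gf)
    (ρ : Fin N → ℝ) (hρpos : ∀ i, 0 < ρ i) (hρsum : ∑ i, ρ i = 1)
    (F : EuclideanSpace ℝ (Fin d) → ℝ) (hF : F = fun x => ∑ i, ρ i * f i x)
    (ρmin : ℝ) (hρminlb : ∀ i, ρmin ≤ ρ i)
    (ηl : ℝ) (hηl : 0 < ηl)
    (K : Fin N → ℕ) (hK : ∀ i, 1 ≤ K i)
    (Kmax : ℕ) (hKmaxub : ∀ i, K i ≤ Kmax)
    (θ : EuclideanSpace ℝ (Fin d))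
    (gI : Fin N → EuclideanSpace ℝ (Fin d))
    (hgI : ∀ i, gI i = ηl • ∑ k ∈ Finset.range (K i),
        gradient (f i) (traj (f i) ηl θ k))
    (hne : ∀ i, gI i ≠ 0)
    (g : EuclideanSpace ℝ (Fin d))
    (halign : ∀ i, ⟪‖gI i‖⁻¹ • gI i, g⟫_ℝ = ρ i)
    (G : ℝ) (hG : ‖g‖ ≤ G)
    (Bdrift : ℝ) (hB : Bdrift = L * Gf / 2 * (G + ∑ i, (ρ i) ^ 2)) :
    ρmin * ‖gradient F θ‖ - Bdrift * (ηl * ((Kmax : ℝ) - 1)) ≤ ⟪gradient F θ, g⟫_ℝ := by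
  set D := L * ηl * Gf * ((Kmax : ℝ) - 1) / 2
  have hclient : ∀ i, ρ i * ‖gradient (f i) θ‖ - ρ i * D - D * G ≤ ⟪gradient (f i) θ, g⟫_ℝ := by
    intro i
    have hK0 : K i ≠ 0 := Nat.one_le_iff_ne_zero.mp (hK i)
    have hL : 0 ≤ L := nonneg_of_norm_sub_le_mul_norm_sub (hLip i (gI i) 0) (hne i)
    have hGf0 : 0 ≤ Gf := (norm_nonneg _).trans (hGf i θ)
    have hmean : ((K i : ℝ) * ηl)⁻¹ • gI i
        = (K i : ℝ)⁻¹ • ∑ k ∈ Finset.range (K i), gradient (f i) (traj (f i) ηl θ k) := by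
      rw [hgI i, smul_smul, mul_inv, inv_mul_cancel_right₀ hηl.ne']
    refine inner_ge_of_inner_eq_mul_norm (s := ((K i : ℝ) * ηl)⁻¹ • gI i)
      (inner_smul_eq_mul_norm_of_inner_normalize_eq (hne i) (halign i) (by positivity))
      (hρpos i).le ?_ hG
    rw [hmean]
    refine (norm_inv_smul_sum_gradient_traj_sub_le θ hηl.le hL (hLip i) (hGf i) hK0).trans ?_
    have hKle : (K i : ℝ) ≤ Kmax := Nat.cast_le.mpr (hKmaxub i)
    dsimp only [D]
    gcongr
  have hFθ : gradient F θ = ∑ i, ρ i • gradient (f i) θ :=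
    hF ▸ gradient_sum_mul _ ρ fun i _ => (hdiff i).differentiableAt
  have hbound := inner_sum_smul_ge Finset.univ (fun i _ => (hρpos i).le) hρsum
    (fun i _ => hρminlb i) (fun i _ => hclient i)
  rw [hFθ]
  convert hbound using 2
  rw [hB]; ring

/-- **Linear common-descent bound.** If the aggregate `g` satisfies the exact alignment
constraints `⟪gᵢ/‖gᵢ‖, g⟫ = ρᵢ` with the accumulated client updates `gᵢ`, and `‖g‖ ≤ G`,
then `⟪∇F(θ), g⟫ ≥ ρ_min‖∇F(θ)‖ − B_drift ηl (K_max − 1)`, where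
`B_drift = (L G_f/2)(G + Σ ρᵢ²)`. -/
theorem linear_common_descent_bound {d N : ℕ} (hd : 1 ≤ d) (hN : 1 ≤ N)
    (f : Fin N → EuclideanSpace ℝ (Fin d) → ℝ) (L Gf : ℝ)
    (hdiff : ∀ i, Differentiable ℝ (f i))
    (hLip : ∀ i x y, ‖gradient (f i) x - gradient (f i) y‖ ≤ L * ‖x - y‖)
    (hGf : ∀ i x, ‖gradient (f i) x‖ ≤ Gf)
    (ρ : Fin N → ℝ) (hρpos : ∀ i, 0 < ρ i) (hρsum : ∑ i, ρ i = 1)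
    (F : EuclideanSpace ℝ (Fin d) → ℝ) (hF : F = fun x => ∑ i, ρ i * f i x)
    (ρmin : ℝ) (hρminlb : ∀ i, ρmin ≤ ρ i) (hρminmem : ∃ i, ρ i = ρmin)
    (ηl : ℝ) (hηl : 0 < ηl)
    (K : Fin N → ℕ) (hK : ∀ i, 1 ≤ K i)
    (Kmax : ℕ) (hKmaxub : ∀ i, K i ≤ Kmax) (hKmaxmem : ∃ i, K i = Kmax)
    (θ : EuclideanSpace ℝ (Fin d))
    (gI : Fin N → EuclideanSpace ℝ (Fin d))
    (hgI : ∀ i, gI i = ηl • ∑ k ∈ Finset.range (K i),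
        gradient (f i) (traj (f i) ηl θ k))
    (hne : ∀ i, gI i ≠ 0)
    (g : EuclideanSpace ℝ (Fin d))
    (halign : ∀ i, ⟪‖gI i‖⁻¹ • gI i, g⟫_ℝ = ρ i)
    (G : ℝ) (hG : ‖g‖ ≤ G)
    (Bdrift : ℝ) (hB : Bdrift = L * Gf / 2 * (G + ∑ i, (ρ i) ^ 2)) :
    ρmin * ‖gradient F θ‖ - Bdrift * (ηl * ((Kmax : ℝ) - 1)) ≤ ⟪gradient F θ, g⟫_ℝ :=
  linear_common_descent_bound_general f L Gf hdiff hLip hGf ρ hρpos hρsum F hF ρmin hρminlb ηl hηl K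
    hK Kmax hKmaxub θ gI hgI hne g halign G hG Bdrift hB
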